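/- arXiv:1604.02577 — 2 statements merged into one kernel-verified Lean document; each statement's English description precedes it below -/
import Mathlib

section
/- For every integer N ≥ p, the left ideal of U(L𝔫₋) generated by the set G = {X_i(r,s) : i ∈ I, r > 0, s < −∑_{k∈S_i} min{r,ℓ_k}} equals the left ideal of U(L𝔫₋) generated by the set G̃_N = {f_{i,k} : i ∈ I, k > N} ∪ {X̃_i^N(r,s) : i ∈ I, r > 0, s < −∑_{k∈S_i} min{r,ℓ_k}}. (This is Lemma 4.2(i) of the paper: the left U(L𝔫₋)-ideal generated by 𝓘 coincides with 𝓙.) -/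
open scoped TensorProduct

noncomputable section

/-- A Cartan matrix of finite type: `C i i = 2`, off-diagonal entries nonpositive, and
there exist positive integers `d i` symmetrizing `C` with `(d i * C i j)` positive definite. -/
def IsFiniteTypeCartanMatrix {n : ℕ} (C : Matrix (Fin n) (Fin n) ℤ) : Prop :=
  (∀ i, C i i = 2) ∧ (∀ i j, i ≠ j → C i j ≤ 0) ∧
    ∃ d : Fin n → ℤ, (∀ i, 0 < d i) ∧ (∀ i j, d i * C i j = d j * C j i) ∧
      ∀ v : Fin n → ℝ, v ≠ 0 → 0 < ∑ i, ∑ j, ((d i * C i j : ℤ) : ℝ) * v i * v j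

variable {n : ℕ} (C : Matrix (Fin n) (Fin n) ℤ)

/-- The generator `f i` of the Chevalley–Serre presented Lie algebra `𝔤(C)`. -/
def SerreF (i : Fin n) : Matrix.ToLieAlgebra ℂ C :=
  LieSubmodule.Quotient.mk (N := CartanMatrix.Relations.toIdeal ℂ C)
    (FreeLieAlgebra.of ℂ (CartanMatrix.Generators.F i))

/-- The Lie subalgebra `𝔫₋ ⊆ 𝔤(C)` generated by the `f i`. -/
def nNeg : LieSubalgebra ℂ (Matrix.ToLieAlgebra ℂ C) :=
  LieSubalgebra.lieSpan ℂ _ (Set.range (SerreF C))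

/-- The loop algebra `L𝔫₋ = 𝔫₋ ⊗ ℂ[t,t⁻¹]`. -/
abbrev LoopNNeg := LaurentPolynomial ℂ ⊗[ℂ] (nNeg C)

instance : LieAlgebra ℂ (LoopNNeg C) where
  lie_smul c x y :=
    calc ⁅x, c • y⁆ = ⁅x, (algebraMap ℂ (LaurentPolynomial ℂ) c) • y⁆ := by
          rw [algebraMap_smul]
      _ = (algebraMap ℂ (LaurentPolynomial ℂ) c) • ⁅x, y⁆ := by
          exact lie_smul (R := LaurentPolynomial ℂ) (algebraMap ℂ (LaurentPolynomial ℂ) c) x y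
      _ = c • ⁅x, y⁆ := algebraMap_smul _ _ _

/-- The universal enveloping algebra `U(L𝔫₋)` over `ℂ`. -/
abbrev ULoop := UniversalEnvelopingAlgebra ℂ (LoopNNeg C)

/-- The element `f_{i,k}`, image of `f_i ⊗ t^k` in `U(L𝔫₋)`. -/
def fik (i : Fin n) (k : ℤ) : ULoop C :=
  UniversalEnvelopingAlgebra.ι ℂ
    ((LaurentPolynomial.T k) ⊗ₜ[ℂ]
      (⟨SerreF C i, LieSubalgebra.subset_lieSpan (Set.mem_range_self i)⟩ : nNeg C))

/-- `X_i(r,s)`: the coefficient of `z^s` in `F_i(z)^r`, i.e. the sum of products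
`f_{i,k₁}⋯f_{i,k_r}` over tuples of nonnegative integers with `k₁+⋯+k_r = -s-r`. -/
def Xcoef (i : Fin n) (r : ℕ) (s : ℤ) : ULoop C :=
  if 0 ≤ -s - (r : ℤ) then
    ∑ k ∈ Finset.Nat.antidiagonalTuple r (-s - (r : ℤ)).toNat,
      (List.ofFn fun j : Fin r => fik C i (k j)).prod
  else 0

/-- `X̃_i^N(r,s)`: the sum of products `f_{i,k₁}⋯f_{i,k_r}` over integer tuples with each
`k_j ≤ N` and `k₁+⋯+k_r = -s-r` (encoded via `k_j = N - m_j`, `m_j ∈ ℕ`). -/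
def XcoefN (N : ℤ) (i : Fin n) (r : ℕ) (s : ℤ) : ULoop C :=
  if 0 ≤ (r : ℤ) * N + s + (r : ℤ) then
    ∑ m ∈ Finset.Nat.antidiagonalTuple r ((r : ℤ) * N + s + (r : ℤ)).toNat,
      (List.ofFn fun j : Fin r => fik C i (N - (m j : ℤ))).prod
  else 0

/-!
For fixed `i` the `f_{i,k}` commute with each other. Let `K` be the left ideal generated by the
`f_{i,k}` with `k > N`. Modulo `K`, `X_i(r,s)` is the coefficient of `z^s` in `A(z)^r`, where
`A = ∑_{0 ≤ k ≤ N} f_{i,k} z^{-k-1}`, while `X̃_i^N(r,s)` is that of `(A + B)^r` with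
`B = ∑_{k < 0} f_{i,k} z^{-k-1}`. The coefficients of `A^m (A + B)^r` interpolate between the two,
and `A^m (A + B)^{r+1} = A^{m+1} (A + B)^r + B A^m (A + B)^r`. Since `B` has only nonnegative powers
of `z`, the last term only involves coefficients of `A^m (A + B)^r` at indices `≤ s`; as
`∑_{k ∈ S_i} min r ℓ_k` is monotone in `r`, induction on `m` (resp. on `r`) spreads the condition
`s < -∑_{k ∈ S_i} min r ℓ_k` from the `X̃_i^N(r,s)` (resp. the `X_i(r,s)`) to all mixed
coefficients. Finally `K` lies in both ideals, because `f_{i,k} = X_i(1,-k-1)` and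
`k > N ≥ p ≥ |S_i|`.
-/

open Finset

theorem Finset.Nat.sum_antidiagonalTuple_succ {M : Type*} [AddCommMonoid M] (k n : ℕ)
    (f : (Fin (k + 1) → ℕ) → M) :
    ∑ x ∈ antidiagonalTuple (k + 1) n, f x =
      ∑ p ∈ antidiagonal n, ∑ y ∈ antidiagonalTuple k p.2, f (Fin.cons p.1 y) := by
  rw [sum_sigma']
  refine sum_nbij' (fun x => ⟨(x 0, n - x 0), Fin.tail x⟩) (fun q => Fin.cons q.1.1 q.2)
    ?_ ?_ (fun x _ => Fin.cons_self_tail x) ?_ (fun x _ => by rw [Fin.cons_self_tail])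
  · intro x hx
    rw [mem_antidiagonalTuple, Fin.sum_univ_succ] at hx
    rw [mem_sigma, HasAntidiagonal.mem_antidiagonal, mem_antidiagonalTuple]
    exact ⟨Nat.add_sub_of_le (hx ▸ Nat.le_add_right _ _), by simp [Fin.tail, ← hx]⟩
  · rintro ⟨⟨a, b⟩, y⟩ h
    rw [mem_sigma, HasAntidiagonal.mem_antidiagonal, mem_antidiagonalTuple] at h
    rw [mem_antidiagonalTuple, Fin.sum_univ_succ]
    simp only [Fin.cons_zero, Fin.cons_succ, h.2, h.1]
  · rintro ⟨⟨a, b⟩, y⟩ h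
    rw [mem_sigma, HasAntidiagonal.mem_antidiagonal] at h
    simp only [Fin.cons_zero, Fin.tail_cons, ← h.1, Nat.add_sub_cancel_left]

theorem Finset.Nat.sum_antidiagonalTuple_succ_prod_ofFn {R : Type*} [Semiring R] (g : ℕ → R)
    (k n : ℕ) :
    ∑ x ∈ antidiagonalTuple (k + 1) n, (List.ofFn fun j => g (x j)).prod =
      ∑ p ∈ antidiagonal n,
        g p.1 * ∑ y ∈ antidiagonalTuple k p.2, (List.ofFn fun j => g (y j)).prod := by
  simp only [Finset.Nat.sum_antidiagonalTuple_succ, mul_sum, List.ofFn_succ, Fin.cons_zero,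
    Fin.cons_succ, List.prod_cons]

theorem Finset.Nat.sum_antidiagonal_eq_sum_Icc {M : Type*} [AddCommMonoid M] (n : ℕ)
    (f : ℕ × ℕ → M) :
    ∑ p ∈ antidiagonal n, f p = ∑ a ∈ Icc (0 : ℤ) n, f (a.toNat, (n - a).toNat) := by
  refine sum_nbij' (fun p => p.1) (fun a => (a.toNat, (n - a).toNat)) ?_ ?_ ?_ ?_ ?_ <;>
    intro x hx <;>
    simp only [HasAntidiagonal.mem_antidiagonal, mem_Icc, Prod.ext_iff] at hx ⊢
  all_goals first | omega | (congr 1; ext <;> omega)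

theorem Finset.Nat.sum_antidiagonal_eq_sum_Icc_sub {M : Type*} [AddCommMonoid M] (n : ℕ) (c : ℤ)
    (f : ℕ × ℕ → M) :
    ∑ p ∈ antidiagonal n, f p = ∑ a ∈ Icc (c - n) c, f ((c - a).toNat, (n - c + a).toNat) := by
  refine sum_nbij' (fun p => c - p.1) (fun a => ((c - a).toNat, (n - c + a).toNat))
    ?_ ?_ ?_ ?_ ?_ <;>
    intro x hx <;>
    simp only [HasAntidiagonal.mem_antidiagonal, mem_Icc, Prod.ext_iff] at hx ⊢
  all_goals first | omega | (congr 1; ext <;> omega)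

section
attribute [local instance] LieRing.ofAssociativeRing

theorem commute_fik_fik (i : Fin n) (a b : ℤ) : Commute (fik C i a) (fik C i b) := by
  rw [commute_iff_lie_eq, fik, fik, ← LieHom.map_lie, LieAlgebra.ExtendScalars.bracket_tmul,
    lie_self, TensorProduct.tmul_zero, map_zero]
end

section
variable (N : ℤ) (i : Fin n)

theorem commute_fik_Xcoef (a : ℤ) (r : ℕ) (s : ℤ) : Commute (fik C i a) (Xcoef C i r s) := by
  unfold Xcoef
  split_ifs
  · refine Commute.sum_right _ _ _ fun x _ => Commute.list_prod_right _ _ fun y hy => ?_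
    obtain ⟨j, rfl⟩ := List.mem_ofFn.mp hy
    exact commute_fik_fik C i a _
  · exact Commute.zero_right _

theorem Xcoef_eq_zero_of_pos {r : ℕ} {s : ℤ} (h : 0 < s + r) : Xcoef C i r s = 0 :=
  if_neg (by omega)

theorem XcoefN_eq_zero_of_neg {r : ℕ} {s : ℤ} (h : r * N + s + r < 0) : XcoefN C N i r s = 0 :=
  if_neg (by omega)

theorem Xcoef_zero (s : ℤ) : Xcoef C i 0 s = if s = 0 then 1 else 0 := by
  unfold Xcoef
  rcases lt_trichotomy s 0 with h | rfl | h
  · rw [if_pos (by omega), if_neg h.ne,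
      show (-s - ((0 : ℕ) : ℤ)).toNat = (-s - 1).toNat + 1 by omega,
      Finset.Nat.antidiagonalTuple_zero_succ, sum_empty]
  · simp
  · rw [if_neg (by omega), if_neg h.ne']

theorem XcoefN_zero (s : ℤ) : XcoefN C N i 0 s = if s = 0 then 1 else 0 := by
  unfold XcoefN
  rcases lt_trichotomy s 0 with h | rfl | h
  · rw [if_neg (by omega), if_neg h.ne]
  · simp
  · rw [if_pos (by omega), if_neg h.ne',
      show (((0 : ℕ) : ℤ) * N + s + ((0 : ℕ) : ℤ)).toNat = (s - 1).toNat + 1 by omega,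
      Finset.Nat.antidiagonalTuple_zero_succ, sum_empty]

theorem Xcoef_one_of_nonneg {k : ℤ} (hk : 0 ≤ k) : Xcoef C i 1 (-k - 1) = fik C i k := by
  rw [Xcoef, if_pos (by omega), Finset.Nat.antidiagonalTuple_one, sum_singleton]
  simp [Int.toNat_of_nonneg hk]

theorem Xcoef_succ (r : ℕ) {s Hi : ℤ} (hHi : -s - 1 - r ≤ Hi) :
    Xcoef C i (r + 1) s = ∑ a ∈ Icc 0 Hi, fik C i a * Xcoef C i r (s + 1 + a) := by
  rcases lt_or_ge (-s - 1 - r) 0 with h | h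
  · rw [Xcoef_eq_zero_of_pos C i (by push_cast; omega)]
    refine (sum_eq_zero fun a ha => ?_).symm
    rw [Xcoef_eq_zero_of_pos C i (by rw [mem_Icc] at ha; omega), mul_zero]
  obtain ⟨M, hM⟩ := Int.eq_ofNat_of_zero_le h
  rw [← sum_subset (Icc_subset_Icc_right (hM ▸ hHi)) fun a ha ha' => by
    rw [Xcoef_eq_zero_of_pos C i (by simp only [mem_Icc] at ha ha'; omega), mul_zero]]
  rw [Xcoef, if_pos (by push_cast; omega), show (-s - ((r + 1 : ℕ) : ℤ)).toNat = M by omega,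
    Finset.Nat.sum_antidiagonalTuple_succ_prod_ofFn (fun k : ℕ => fik C i k),
    Finset.Nat.sum_antidiagonal_eq_sum_Icc]
  refine sum_congr rfl fun a ha => ?_
  rw [mem_Icc] at ha
  rw [Xcoef, if_pos (by omega), Int.toNat_of_nonneg ha.1,
    show (-(s + 1 + a) - r).toNat = (M - a).toNat by omega]

theorem XcoefN_succ (r : ℕ) {s Lo : ℤ} (hLo : Lo ≤ -s - 1 - r * (N + 1)) :
    XcoefN C N i (r + 1) s = ∑ a ∈ Icc Lo N, fik C i a * XcoefN C N i r (s + 1 + a) := by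
  have hLo' : Lo ≤ -s - 1 - r * N - r := by linarith
  have hsucc : ((r + 1 : ℕ) : ℤ) * N + s + (r + 1 : ℕ) = r * N + s + r + N + 1 := by push_cast; ring
  rcases lt_or_ge (r * N + s + r + N + 1) 0 with h | h
  · rw [XcoefN_eq_zero_of_neg C N i (hsucc ▸ h)]
    refine (sum_eq_zero fun a ha => ?_).symm
    rw [XcoefN_eq_zero_of_neg C N i (by rw [mem_Icc] at ha; omega), mul_zero]
  obtain ⟨M, hM⟩ := Int.eq_ofNat_of_zero_le h
  rw [← sum_subset (Icc_subset_Icc_left (show Lo ≤ N - M by omega)) fun a ha ha' => by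
    rw [XcoefN_eq_zero_of_neg C N i (by simp only [mem_Icc] at ha ha'; omega), mul_zero]]
  rw [XcoefN, hsucc, if_pos h, hM, Int.toNat_natCast,
    Finset.Nat.sum_antidiagonalTuple_succ_prod_ofFn (fun k : ℕ => fik C i (N - k)),
    Finset.Nat.sum_antidiagonal_eq_sum_Icc_sub M N]
  refine sum_congr rfl fun a ha => ?_
  rw [mem_Icc] at ha
  rw [XcoefN, if_pos (by omega), Int.toNat_of_nonneg (by omega : 0 ≤ N - a),
    show (r * N + (s + 1 + a) + r).toNat = (M - N + a).toNat by omega, sub_sub_cancel]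

/-- The coefficient of `z ^ s` in `A(z) ^ m * F_i^N(z) ^ r`, where
`A(z) = ∑_{0 ≤ k ≤ N} f_{i,k} z^{-k-1}` and `F_i^N(z) = ∑_{k ≤ N} f_{i,k} z^{-k-1}`. -/
def mixedCoeff : ℕ → ℕ → ℤ → ULoop C
  | 0, r, s => XcoefN C N i r s
  | m + 1, r, s => ∑ a ∈ Icc 0 N, fik C i a * mixedCoeff m r (s + 1 + a)

theorem mixedCoeff_succ_right_of_le (m r : ℕ) {s Lo : ℤ}
    (hLo : Lo ≤ -s - 1 - (m + r) * (N + 1)) :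
    mixedCoeff C N i m (r + 1) s =
      ∑ a ∈ Icc Lo N, fik C i a * mixedCoeff C N i m r (s + 1 + a) := by
  induction m generalizing s with
  | zero => exact XcoefN_succ C N i r (by simpa using hLo)
  | succ m ih =>
    calc mixedCoeff C N i (m + 1) (r + 1) s
        = ∑ c ∈ Icc 0 N, fik C i c *
            ∑ a ∈ Icc Lo N, fik C i a * mixedCoeff C N i m r (s + 1 + c + 1 + a) := by
          refine sum_congr rfl fun c hc => ?_
          rw [mem_Icc] at hc
          push_cast at hLo
          rw [ih (by nlinarith)]
      _ = ∑ a ∈ Icc Lo N, fik C i a *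
            ∑ c ∈ Icc 0 N, fik C i c * mixedCoeff C N i m r (s + 1 + a + 1 + c) := by
          simp only [mul_sum]
          rw [sum_comm]
          refine sum_congr rfl fun a _ => sum_congr rfl fun c _ => ?_
          rw [← mul_assoc, ← mul_assoc, (commute_fik_fik C i c a).eq, add_right_comm (s + 1) c,
            add_right_comm (s + 1 + 1) c, add_right_comm (s + 1) 1 a]

theorem exists_mixedCoeff_succ_right_eq (m r : ℕ) (s : ℤ) :
    ∃ T : Finset ℤ, (∀ a ∈ T, a < 0) ∧ mixedCoeff C N i m (r + 1) s =
      mixedCoeff C N i (m + 1) r s + ∑ a ∈ T, fik C i a * mixedCoeff C N i m r (s + 1 + a) := by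
  set Lo := min (-s - 1 - (m + r) * (N + 1)) 0
  refine ⟨(Icc Lo N).filter (· < 0), fun a ha => (mem_filter.1 ha).2, ?_⟩
  rw [mixedCoeff_succ_right_of_le C N i m r (min_le_left _ _),
    ← sum_filter_not_add_sum_filter _ (· < 0)]
  congr 1
  refine sum_congr ?_ fun _ _ => rfl
  ext a
  simp only [mem_filter, mem_Icc, not_lt]
  omega

theorem Xcoef_sub_mixedCoeff_mem (m : ℕ) (s : ℤ) :
    Xcoef C i m s - mixedCoeff C N i m 0 s ∈ Ideal.span (fik C i '' Set.Ioi N) := by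
  induction m generalizing s with
  | zero => simp [mixedCoeff, Xcoef_zero, XcoefN_zero]
  | succ m ih =>
    set Hi := max N (-s - 1 - m)
    have hlow : (Icc 0 Hi).filter (· ≤ N) = Icc 0 N := by
      ext a
      simp only [mem_filter, mem_Icc]
      omega
    rw [Xcoef_succ C i m (le_max_right N _), ← sum_filter_add_sum_filter_not _ (· ≤ N), hlow,
      mixedCoeff, add_sub_right_comm, ← sum_sub_distrib]
    simp only [← mul_sub]
    refine add_mem (sum_mem fun a _ => Ideal.mul_mem_left _ _ (ih _))
      (sum_mem fun a ha => ?_)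
    rw [(commute_fik_Xcoef C i a m _).eq]
    exact Ideal.mul_mem_left _ _ (Ideal.subset_span ⟨a, not_le.1 (mem_filter.1 ha).2, rfl⟩)

variable {J : Ideal (ULoop C)} {t : ℕ → ℤ}

theorem mixedCoeff_mem_of_XcoefN_mem (ht : Monotone t)
    (hJ : ∀ r s, s < -t r → XcoefN C N i r s ∈ J) (m r : ℕ) {s : ℤ} (hs : s < -t (m + r)) :
    mixedCoeff C N i m r s ∈ J := by
  induction m generalizing r s with
  | zero => exact hJ r s (by simpa using hs)
  | succ m ih =>
    obtain ⟨T, hT, hsplit⟩ := exists_mixedCoeff_succ_right_eq C N i m r s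
    have hmono := ht (show m + r ≤ m + 1 + r by omega)
    rw [eq_sub_of_add_eq hsplit.symm]
    refine sub_mem (ih (r + 1) (by rwa [← Nat.add_right_comm] at hs))
      (sum_mem fun a ha => J.mul_mem_left _ (ih r ?_))
    linarith [hT a ha]

theorem mixedCoeff_mem_of_Xcoef_mem (ht : Monotone t)
    (hK : Ideal.span (fik C i '' Set.Ioi N) ≤ J)
    (hJ : ∀ r s, s < -t r → Xcoef C i r s ∈ J) (m r : ℕ) {s : ℤ} (hs : s < -t (m + r)) :
    mixedCoeff C N i m r s ∈ J := by
  induction r generalizing m s with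
  | zero =>
    rw [← sub_sub_cancel (Xcoef C i m s) (mixedCoeff C N i m 0 s)]
    exact sub_mem (hJ m s hs) (hK (Xcoef_sub_mixedCoeff_mem C N i m s))
  | succ r ih =>
    obtain ⟨T, hT, hsplit⟩ := exists_mixedCoeff_succ_right_eq C N i m r s
    have hmono := ht (show m + r ≤ m + (r + 1) by omega)
    rw [hsplit]
    refine add_mem (ih (m + 1) (by rwa [Nat.add_right_comm]))
      (sum_mem fun a ha => J.mul_mem_left _ (ih m ?_))
    linarith [hT a ha]

end

section
variable {p : ℕ} (iseq : Fin p → Fin n) (ℓ : Fin p → ℕ) (i : Fin n)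

def cutoff (r : ℕ) : ℕ := ∑ k, if iseq k = i then min r (ℓ k) else 0

theorem cutoff_mono : Monotone (cutoff iseq ℓ i) :=
  fun _ _ h => sum_le_sum fun _ _ => by split_ifs <;> omega

theorem cutoff_zero : cutoff iseq ℓ i 0 = 0 := by
  simp [cutoff]

theorem cutoff_one_le : cutoff iseq ℓ i 1 ≤ p :=
  calc cutoff iseq ℓ i 1 ≤ ∑ _k : Fin p, 1 := sum_le_sum fun _ _ => by split_ifs <;> omega
    _ = p := by simp

variable (N : ℤ)

def XcoefGens : Set (ULoop C) :=
  {u | ∃ (i : Fin n) (r : ℕ) (s : ℤ), 0 < r ∧ s < -(cutoff iseq ℓ i r : ℤ) ∧ u = Xcoef C i r s}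

def XcoefNGens : Set (ULoop C) :=
  {u | ∃ (i : Fin n) (k : ℤ), N < k ∧ u = fik C i k} ∪
    {u | ∃ (i : Fin n) (r : ℕ) (s : ℤ), 0 < r ∧ s < -(cutoff iseq ℓ i r : ℤ) ∧
      u = XcoefN C N i r s}

variable {iseq ℓ i}

theorem Xcoef_mem_span_XcoefGens {r : ℕ} {s : ℤ} (hs : s < -(cutoff iseq ℓ i r : ℤ)) :
    Xcoef C i r s ∈ Ideal.span (XcoefGens C iseq ℓ) := by
  rcases r.eq_zero_or_pos with rfl | hr
  · rw [cutoff_zero] at hs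
    rw [Xcoef_zero, if_neg (by omega)]
    exact zero_mem _
  · exact Ideal.subset_span ⟨i, r, s, hr, hs, rfl⟩

theorem XcoefN_mem_span_XcoefNGens {r : ℕ} {s : ℤ} (hs : s < -(cutoff iseq ℓ i r : ℤ)) :
    XcoefN C N i r s ∈ Ideal.span (XcoefNGens C iseq ℓ N) := by
  rcases r.eq_zero_or_pos with rfl | hr
  · rw [cutoff_zero] at hs
    rw [XcoefN_eq_zero_of_neg C N i (by simpa using hs)]
    exact zero_mem _
  · exact Ideal.subset_span (Or.inr ⟨i, r, s, hr, hs, rfl⟩)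

theorem span_fik_le_span_XcoefGens (hN : (p : ℤ) ≤ N) :
    Ideal.span (fik C i '' Set.Ioi N) ≤ Ideal.span (XcoefGens C iseq ℓ) := by
  rw [Ideal.span_le]
  rintro _ ⟨k, hk : N < k, rfl⟩
  have := cutoff_one_le iseq ℓ i
  rw [← Xcoef_one_of_nonneg C i (by omega : 0 ≤ k)]
  exact Xcoef_mem_span_XcoefGens C (by omega)

theorem span_fik_le_span_XcoefNGens :
    Ideal.span (fik C i '' Set.Ioi N) ≤ Ideal.span (XcoefNGens C iseq ℓ N) := by
  rw [Ideal.span_le]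
  rintro _ ⟨k, hk, rfl⟩
  exact Ideal.subset_span (Or.inl ⟨i, k, hk, rfl⟩)

theorem Xcoef_mem_span_XcoefNGens {r : ℕ} {s : ℤ} (hs : s < -(cutoff iseq ℓ i r : ℤ)) :
    Xcoef C i r s ∈ Ideal.span (XcoefNGens C iseq ℓ N) := by
  rw [← sub_add_cancel (Xcoef C i r s) (mixedCoeff C N i r 0 s)]
  exact add_mem (span_fik_le_span_XcoefNGens C N (Xcoef_sub_mixedCoeff_mem C N i r s))
    (mixedCoeff_mem_of_XcoefN_mem C N i (Nat.mono_cast.comp (cutoff_mono iseq ℓ i))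
      (fun _ _ => XcoefN_mem_span_XcoefNGens C N) r 0 hs)

theorem XcoefN_mem_span_XcoefGens (hN : (p : ℤ) ≤ N) {r : ℕ} {s : ℤ}
    (hs : s < -(cutoff iseq ℓ i r : ℤ)) :
    XcoefN C N i r s ∈ Ideal.span (XcoefGens C iseq ℓ) :=
  mixedCoeff_mem_of_Xcoef_mem C N i (Nat.mono_cast.comp (cutoff_mono iseq ℓ i))
    (span_fik_le_span_XcoefGens C N hN) (fun _ _ => Xcoef_mem_span_XcoefGens C) 0 r
    (by rwa [zero_add])

end

theorem ideal_span_Xcoef_eq_ideal_span_XcoefN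
    {p : ℕ}
    (iseq : Fin p → Fin n) (ℓ : Fin p → ℕ)
    (N : ℤ) (hN : (p : ℤ) ≤ N) :
    Ideal.span {u : ULoop C | ∃ (i : Fin n) (r : ℕ) (s : ℤ), 0 < r ∧
        s < -((∑ k : Fin p, if iseq k = i then min r (ℓ k) else 0 : ℕ) : ℤ) ∧
        u = Xcoef C i r s} =
    Ideal.span ({u : ULoop C | ∃ (i : Fin n) (k : ℤ), N < k ∧ u = fik C i k} ∪
      {u : ULoop C | ∃ (i : Fin n) (r : ℕ) (s : ℤ), 0 < r ∧
        s < -((∑ k : Fin p, if iseq k = i then min r (ℓ k) else 0 : ℕ) : ℤ) ∧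
        u = XcoefN C N i r s}) := by
  change Ideal.span (XcoefGens C iseq ℓ) = Ideal.span (XcoefNGens C iseq ℓ N)
  refine le_antisymm (Ideal.span_le.2 ?_) (Ideal.span_le.2 ?_)
  · rintro _ ⟨i, r, s, -, hs, rfl⟩
    exact Xcoef_mem_span_XcoefNGens C N hs
  · rintro _ (⟨i, k, hk, rfl⟩ | ⟨i, r, s, -, hs, rfl⟩)
    · exact span_fik_le_span_XcoefGens C N hN (Ideal.subset_span ⟨k, hk, rfl⟩)
    · exact XcoefN_mem_span_XcoefGens C N hN hs
end
end

section
/- For each i ∈ I let m^{(i)} : ℤ_{≥1} → ℤ_{≥0}, a ↦ m_a^{(i)}, be a finitely supported function (the multiplicities of the row lengths of a partition μ^{(i)}, so |μ^{(i)}| = ∑_{a≥1} a·m_a^{(i)}), and assume that not all m_a^{(i)} are zero. Define P(μ) = ∑_{i∈I} ( ∑_{a,b≥1} min{a,b}·m_a^{(i)}·m_b^{(i)} − ∑_{a≥1} a·m_a^{(i)} ) − ∑_{i<j} ∑_{a,b≥1} min{|c_{ji}|·a, |c_{ij}|·b}·m_a^{(i)}·m_b^{(j)} (the first bracket equals twice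 the sum of min{a,b} over unordered pairs of distinct rows of μ^{(i)}). Then P(μ) > −∑_{i∈I} |μ^{(i)}|. (This is Lemma A.3 of the paper.) -/
/-!
Fix symmetrizers `d i`. Stretch every row of `μ⁽ⁱ⁾` by the factor `d i` and let `uᵢ(t)` be the
number of rows of the stretched diagram longer than `t`, i.e. its column lengths. Counting the
cells of the intersection of two rows gives
`∑ min(dᵢa, dⱼb) mₐ⁽ⁱ⁾ m_b⁽ʲ⁾ = ∑ₜ uᵢ(t) uⱼ(t)`, and since `dⱼ|cⱼᵢ| = dᵢ|cᵢⱼ|`, both the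
diagonal and the off-diagonal terms of `P(μ) + ∑ᵢ |μ⁽ⁱ⁾|` are of this shape. Altogether
`P(μ) + ∑ᵢ |μ⁽ⁱ⁾| = ½ ∑ₜ ∑ᵢⱼ dᵢcᵢⱼ (uᵢ(t)/dᵢ)(uⱼ(t)/dⱼ)`, a sum of values of the positive
definite form, and the term of the first column `t = 0` is positive.
-/

noncomputable section

open Finset

section ColumnCounts

variable {α β : Type*}

/-- The column lengths of the diagram having `f a` rows of length `x a` for each `a`. -/
def colCount (f : α →₀ ℕ) (x : α → ℕ) (t : ℕ) : ℕ :=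
  f.sum fun a m => if t < x a then m else 0

theorem min_eq_sum_range_ite {x N : ℕ} (y : ℕ) (h : x ≤ N) :
    min x y = ∑ t ∈ range N, if t < x ∧ t < y then 1 else 0 := by
  rw [sum_boole, Nat.cast_id]
  have : (range N).filter (fun t => t < x ∧ t < y) = range (min x y) := by
    ext t; simp only [mem_filter, mem_range, lt_min_iff]; omega
  rw [this, card_range]

theorem finsuppSum_min_mul_eq_sum_colCount_mul (f : α →₀ ℕ) (g : β →₀ ℕ) (x : α → ℕ)
    (y : β → ℕ) {N : ℕ} (hN : ∀ a ∈ f.support, x a ≤ N) :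
    (f.sum fun a m => g.sum fun b k => min (x a) (y b) * m * k) =
      ∑ t ∈ range N, colCount f x t * colCount g y t := by
  simp only [colCount, Finsupp.sum, sum_mul_sum]
  rw [sum_comm' (t' := f.support) (s' := fun _ => range N) (by simp)]
  refine sum_congr rfl fun a ha => ?_
  rw [sum_comm]
  refine sum_congr rfl fun b _ => ?_
  rw [min_eq_sum_range_ite _ (hN a ha), sum_mul, sum_mul]
  refine sum_congr rfl fun t _ => ?_
  split_ifs <;> simp_all

theorem colCount_zero_pos {f : α →₀ ℕ} {x : α → ℕ} (hf : f ≠ 0)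
    (hx : ∀ a ∈ f.support, 0 < x a) : 0 < colCount f x 0 := by
  refine sum_pos (fun a ha => ?_) (Finsupp.support_nonempty_iff.mpr hf)
  simp only [if_pos (hx a ha)]
  exact Nat.pos_of_ne_zero (Finsupp.mem_support_iff.mp ha)

end ColumnCounts

theorem mul_finsuppSum_min_mul {α β : Type*} {k : ℤ} (hk : 0 ≤ k) (f : α →₀ ℕ) (g : β →₀ ℕ)
    (x : α → ℤ) (y : β → ℤ) :
    k * (f.sum fun a m => g.sum fun b l => min (x a) (y b) * m * l) =
      f.sum fun a m => g.sum fun b l => min (k * x a) (k * y b) * m * l := by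
  simp only [Finsupp.mul_sum, ← mul_assoc, mul_min_of_nonneg _ _ hk]

/-- Since `e' * p = e * q`, the rows `p * a`, `q * b` are the rows `e * a`, `e' * b` scaled by
the common factor `q / e'`. -/
theorem mul_finsuppSum_min_mul_eq_sum_colCount (f g : ℕ →₀ ℕ) {e e' : ℕ} {p q : ℤ}
    (hq : 0 ≤ q) (hpq : e' * p = e * q) {N : ℕ} (hN : ∀ a ∈ f.support, e * a ≤ N) :
    e' * (f.sum fun a m => g.sum fun b l => min (p * a) (q * b) * m * l) =
      q * ∑ t ∈ range N, colCount f (e * ·) t * colCount g (e' * ·) t := by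
  have hp : ∀ a : ℤ, e' * (p * a) = q * (e * a) := fun a => by linear_combination a * hpq
  have hq' : ∀ b : ℤ, e' * (q * b) = q * (e' * b) := fun b => by ring
  rw [mul_finsuppSum_min_mul (Int.natCast_nonneg e') f g (fun a : ℕ => p * a)
      (fun b : ℕ => q * b)]
  simp only [hp, hq']
  rw [← mul_finsuppSum_min_mul hq f g (fun a : ℕ => (e : ℤ) * a) (fun b : ℕ => (e' : ℤ) * b),
    ← finsuppSum_min_mul_eq_sum_colCount_mul f g _ _ hN]
  push_cast
  rfl

theorem sum_sum_eq_sum_add_two_mul_sum_lt {ι R : Type*} [Fintype ι] [LinearOrder ι] [Semiring R]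
    (g : ι → ι → R) (hg : ∀ i j, g i j = g j i) :
    ∑ i, ∑ j, g i j = ∑ i, g i i + 2 * ∑ i, ∑ j, if i < j then g i j else 0 := by
  have hsplit : ∀ i j, g i j = (if i = j then g i j else 0) +
      ((if i < j then g i j else 0) + if j < i then g j i else 0) := by
    intro i j
    rcases lt_trichotomy i j with h | rfl | h
    · simp [h, h.ne, h.not_gt]
    · simp
    · simp [h, h.ne', h.not_gt, hg i j]
  rw [sum_congr rfl fun i _ => sum_congr rfl fun j _ => hsplit i j]
  simp only [sum_add_distrib, sum_ite_eq, mem_univ, if_true]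
  rw [sum_comm (f := fun i j => if j < i then g j i else 0), two_mul]

theorem cartan_gram_pos {n : ℕ} {κ : Type*} (C : Matrix (Fin n) (Fin n) ℤ) (d : Fin n → ℕ)
    (hd : ∀ i, 0 < d i)
    (hpd : ∀ v : Fin n → ℝ, v ≠ 0 → 0 < ∑ i, ∑ j, (((d i : ℤ) * C i j : ℤ) : ℝ) * v i * v j)
    (s : Finset κ) (u : Fin n → κ → ℝ) {t₀ : κ} (ht₀ : t₀ ∈ s) (hu : (u · t₀) ≠ 0) :
    0 < ∑ i, ∑ j, (C i j : ℝ) / d j * ∑ t ∈ s, u i t * u j t := by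
  have hd' : ∀ i, (d i : ℝ) ≠ 0 := fun i => by exact_mod_cast (hd i).ne'
  set Q : (Fin n → ℝ) → ℝ := fun v => ∑ i, ∑ j, (((d i : ℤ) * C i j : ℤ) : ℝ) * v i * v j
  have hQ : ∀ v, 0 ≤ Q v := fun v => by
    rcases eq_or_ne v 0 with rfl | hv
    · simp [Q]
    · exact (hpd v hv).le
  have hcol : ∀ t, ∑ i, ∑ j, (C i j : ℝ) / d j * (u i t * u j t) = Q fun i => u i t / d i := by
    intro t
    refine sum_congr rfl fun i _ => sum_congr rfl fun j _ => ?_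
    push_cast
    field_simp [hd' i, hd' j]
  calc (0 : ℝ) < ∑ t ∈ s, Q fun i => u i t / d i := by
        refine sum_pos' (fun t _ => hQ _) ⟨t₀, ht₀, hpd _ ?_⟩
        contrapose! hu
        funext i
        simpa [hd' i] using congrFun hu i
    _ = _ := by
        simp_rw [← hcol, mul_sum]
        rw [sum_comm]
        exact sum_congr rfl fun i _ => sum_comm

theorem sum_sub_sum_ite_pos_of_gram {n : ℕ} {κ : Type*} (C : Matrix (Fin n) (Fin n) ℤ)
    (d : Fin n → ℕ) (hd : ∀ i, 0 < d i) (hdiag : ∀ i, C i i = 2)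
    (hsym : ∀ i j, (d i : ℤ) * C i j = d j * C j i)
    (hpd : ∀ v : Fin n → ℝ, v ≠ 0 → 0 < ∑ i, ∑ j, (((d i : ℤ) * C i j : ℤ) : ℝ) * v i * v j)
    (s : Finset κ) (u : Fin n → κ → ℝ) {t₀ : κ} (ht₀ : t₀ ∈ s) (hu : (u · t₀) ≠ 0)
    {S : Fin n → ℝ} {X : Fin n → Fin n → ℝ} (hS : ∀ i, d i * S i = ∑ t ∈ s, u i t * u i t)
    (hX : ∀ i j, i < j → d j * X i j = -C i j * ∑ t ∈ s, u i t * u j t) :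
    0 < ∑ i, S i - ∑ i, ∑ j, if i < j then X i j else 0 := by
  have hd' : ∀ i, (d i : ℝ) ≠ 0 := fun i => by exact_mod_cast (hd i).ne'
  have hsymm : ∀ i j, (C i j : ℝ) / d j * ∑ t ∈ s, u i t * u j t =
      (C j i : ℝ) / d i * ∑ t ∈ s, u j t * u i t := by
    intro i j
    have h : (d i : ℝ) * C i j = d j * C j i := by exact_mod_cast hsym i j
    simp_rw [mul_comm (u j _)]
    field_simp [hd' i, hd' j]
    linear_combination (∑ t ∈ s, u i t * u j t) * h
  have hpos := cartan_gram_pos C d hd hpd s u ht₀ hu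
  rw [sum_sum_eq_sum_add_two_mul_sum_lt _ hsymm] at hpos
  refine (half_pos hpos).trans_eq ?_
  rw [add_div, mul_div_cancel_left₀ _ two_ne_zero, sum_div, sub_eq_add_neg, ← sum_neg_distrib]
  congr 1 <;> refine sum_congr rfl fun i _ => ?_
  · rw [hdiag, eq_div_of_mul_eq (hd' i) ((mul_comm _ _).trans (hS i))]
    push_cast
    field_simp
  · rw [← sum_neg_distrib]
    refine sum_congr rfl fun j _ => ?_
    split_ifs with hij
    · rw [eq_div_of_mul_eq (hd' j) ((mul_comm _ _).trans (hX i j hij))]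
      ring
    · ring

/-- Lemma A.3: for an `I`-tuple of (multiplicity functions of) partitions
`μ = (μ^{(1)},…,μ^{(n)})` (where `μ i a` is the number of rows of length `a ≥ 1` in
`μ^{(i)}`), not all empty, one has `P(μ) > -∑_i |μ^{(i)}|`. -/
theorem fermionic_P_gt_neg_size {n : ℕ}
    (C : Matrix (Fin n) (Fin n) ℤ) (hC : IsFiniteTypeCartanMatrix C)
    (μ : Fin n → (ℕ →₀ ℕ)) (h0 : ∀ i, μ i 0 = 0) (hne : ∃ i, μ i ≠ 0) :
    -(∑ i : Fin n, (μ i).sum fun a ca => (a : ℤ) * (ca : ℤ)) <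
      (∑ i : Fin n,
          (((μ i).sum fun a ca => (μ i).sum fun b cb =>
              (min a b : ℤ) * (ca : ℤ) * (cb : ℤ)) -
            (μ i).sum fun a ca => (a : ℤ) * (ca : ℤ))) -
        ∑ i : Fin n, ∑ j : Fin n,
          (if i < j then
            (μ i).sum fun a ca => (μ j).sum fun b cb =>
              (min ((-C j i) * (a : ℤ)) ((-C i j) * (b : ℤ))) * (ca : ℤ) * (cb : ℤ)
          else 0) := by
  obtain ⟨hdiag, hoff, d, hd, hsym, hpd⟩ := hC
  lift d to Fin n → ℕ using fun i => (hd i).le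
  simp only [Nat.cast_pos] at hd hsym hpd
  obtain ⟨N, hN₀, hN⟩ : ∃ N, 0 < N ∧ ∀ i, ∀ a ∈ (μ i).support, d i * a ≤ N :=
    ⟨(univ.sup fun i => (μ i).support.sup (d i * ·)) + 1, Nat.succ_pos _, fun i a ha =>
      ((le_sup (f := (d i * ·)) ha).trans
        (le_sup (f := fun i => (μ i).support.sup (d i * ·)) (mem_univ i))).trans (Nat.le_succ _)⟩
  obtain ⟨i₀, hi₀⟩ := hne
  have hu : (fun i => (colCount (μ i) (d i * ·) 0 : ℝ)) ≠ 0 := by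
    refine Function.ne_iff.2 ⟨i₀, Nat.cast_ne_zero.2 (colCount_zero_pos hi₀ fun a ha => ?_).ne'⟩
    have ha₀ : a ≠ 0 := by rintro rfl; exact Finsupp.mem_support_iff.mp ha (h0 i₀)
    exact Nat.mul_pos (hd i₀) (Nat.pos_of_ne_zero ha₀)
  rw [sum_sub_distrib, sub_right_comm, ← zero_sub, sub_lt_sub_iff_right, ← Int.cast_pos (R := ℝ)]
  simp only [Int.cast_sub, Int.cast_sum, Int.cast_ite, Int.cast_zero]
  refine sum_sub_sum_ite_pos_of_gram C d hd hdiag hsym hpd (range N)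
    (fun i t => colCount (μ i) (d i * ·) t) (mem_range.2 hN₀) hu (fun i => ?_) fun i j hij => ?_
  · have := mul_finsuppSum_min_mul_eq_sum_colCount (μ i) (μ i) zero_le_one rfl (hN i)
    simp only [one_mul] at this
    exact_mod_cast this
  · exact_mod_cast mul_finsuppSum_min_mul_eq_sum_colCount (μ i) (μ j)
      (neg_nonneg.2 (hoff i j hij.ne)) (by linear_combination hsym i j) (hN i)
end
end
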